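/- arXiv:2007.00721 — 2 statements merged into one kernel-verified Lean document; each statement's English description precedes it below -/
import Mathlib

section
/- For every n > 0 there exists an integer i with 1 ≤ i ≤ 4 and i ≤ n such that SG(n − i) = 0, where SG is the Sprague–Grundy function of the game i-Mark({1},{2,3}). (Every interval of 4 consecutive positions contains a position with SG value 0.) -/
/-- The minimum excludant of a finite set of naturals. -/
noncomputable def mex (s : Finset ℕ) : ℕ := sInf {x : ℕ | x ∉ s}

/-- Sprague–Grundy function of the game i-Mark({1},{2,3}):
from a positive pile of `n` tokens one may subtract `1`,
or move to `n / 2` if `2 ∣ n`, or to `n / 3` if `3 ∣ n`. -/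
noncomputable def sg : ℕ → ℕ
  | 0 => 0
  | n + 1 =>
    mex ({sg n} ∪
         (if 2 ∣ (n + 1) then {sg ((n + 1) / 2)} else ∅) ∪
         (if 3 ∣ (n + 1) then {sg ((n + 1) / 3)} else ∅))
termination_by n => n
decreasing_by
  · omega
  · exact Nat.div_lt_self (Nat.succ_pos n) (by norm_num)
  · exact Nat.div_lt_self (Nat.succ_pos n) (by norm_num)

lemma mex_ne_zero_of_mem {s : Finset ℕ} (h : 0 ∈ s) : mex s ≠ 0 := by
  have hne : {x : ℕ | x ∉ s}.Nonempty := by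
    have := s.finite_toSet.infinite_compl
    exact this.nonempty
  have hmem := Nat.sInf_mem hne
  intro h0
  rw [mex] at h0
  rw [h0] at hmem
  exact hmem h

lemma mem_of_mex_ne_zero {s : Finset ℕ} (h : mex s ≠ 0) : 0 ∈ s := by
  by_contra h0
  exact h (Nat.sInf_eq_zero.mpr (Or.inl h0))

lemma sg_succ_ne_zero (n : ℕ) (h : sg n = 0) : sg (n + 1) ≠ 0 := by
  rw [sg]
  apply mex_ne_zero_of_mem
  simp [h]

lemma sg_div_zero (n : ℕ) (h : sg n ≠ 0) (h1 : sg (n + 1) ≠ 0) :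
    (2 ∣ (n + 1) ∧ sg ((n + 1) / 2) = 0) ∨ (3 ∣ (n + 1) ∧ sg ((n + 1) / 3) = 0) := by
  rw [sg] at h1
  have := mem_of_mex_ne_zero h1
  simp only [Finset.mem_union, Finset.mem_singleton] at this
  rcases this with (h2 | h2) | h2
  · exact absurd h2.symm h
  · by_cases hd : 2 ∣ (n + 1)
    · simp [hd] at h2; exact Or.inl ⟨hd, h2.symm⟩
    · simp [hd] at h2
  · by_cases hd : 3 ∣ (n + 1)
    · simp [hd] at h2; exact Or.inr ⟨hd, h2.symm⟩
    · simp [hd] at h2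

theorem gap_zero (n : ℕ) (hn : 0 < n) :
    ∃ i : ℕ, 1 ≤ i ∧ i ≤ 4 ∧ i ≤ n ∧ sg (n - i) = 0 := by
  by_cases hsmall : n ≤ 4
  · exact ⟨n, hn, hsmall, le_refl n, by simp [sg]⟩
  push_neg at hsmall
  by_contra hc
  push_neg at hc
  set m := n - 4 with hm
  have hm1 : n - 4 = m := rfl
  have e1 : n - 1 = m + 3 := by omega
  have e2 : n - 2 = m + 2 := by omega
  have e3 : n - 3 = m + 1 := by omega
  have h0 : sg m ≠ 0 := by have := hc 4 (by norm_num) (by norm_num) (by omega); rwa [hm1] at this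
  have h1 : sg (m + 1) ≠ 0 := by have := hc 3 (by norm_num) (by norm_num) (by omega); rwa [e3] at this
  have h2 : sg (m + 2) ≠ 0 := by have := hc 2 (by norm_num) (by norm_num) (by omega); rwa [e2] at this
  have h3 : sg (m + 3) ≠ 0 := by have := hc 1 (by norm_num) (by norm_num) (by omega); rwa [e1] at this
  have d1 := sg_div_zero m h0 h1
  have d2 := sg_div_zero (m + 1) h1 (by rwa [show m + 1 + 1 = m + 2 from rfl])
  have d3 := sg_div_zero (m + 2) h2 (by rwa [show m + 2 + 1 = m + 3 from rfl])
  rcases d1 with ⟨hd1, hz1⟩ | ⟨hd1, hz1⟩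
  · rcases d2 with ⟨hd2, _⟩ | ⟨hd2, _⟩
    · omega
    · rcases d3 with ⟨hd3, hz3⟩ | ⟨hd3, _⟩
      · -- 2 ∣ m+1, 3 ∣ m+2, 2 ∣ m+3, sg((m+1)/2)=0, sg((m+3)/2)=0
        have : (m + 2 + 1) / 2 = (m + 1) / 2 + 1 := by omega
        rw [this] at hz3
        exact sg_succ_ne_zero _ hz1 hz3
      · omega
  · rcases d2 with ⟨hd2, _⟩ | ⟨hd2, _⟩
    · rcases d3 with ⟨hd3, _⟩ | ⟨hd3, _⟩ <;> omega
    · omega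
end

section
/- For every n > 1 there exists an integer i with 1 ≤ i ≤ 10 and i ≤ n − 1 such that SG(n − i) = 1, where SG is the Sprague–Grundy function of the game i-Mark({1},{2,3}). (Every interval of 10 consecutive positions, lying in [1, ∞), contains a position with SG value 1.) -/
lemma mex_not_mem (s : Finset ℕ) : mex s ∉ s := by
  have h : {x : ℕ | x ∉ s}.Nonempty := by
    obtain ⟨x, hx⟩ := Infinite.exists_notMem_finset s
    exact ⟨x, hx⟩
  exact Nat.sInf_mem h

lemma mem_of_lt_mex {s : Finset ℕ} {y : ℕ} (h : y < mex s) : y ∈ s := by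
  by_contra hy
  have : mex s ≤ y := Nat.sInf_le hy
  omega

lemma sg_succ (n : ℕ) : sg (n + 1) =
    mex ({sg n} ∪
         (if 2 ∣ (n + 1) then {sg ((n + 1) / 2)} else ∅) ∪
         (if 3 ∣ (n + 1) then {sg ((n + 1) / 3)} else ∅)) := by
  rw [sg]

lemma sg_succ_ne (n : ℕ) : sg (n + 1) ≠ sg n := by
  rw [sg_succ]
  intro h
  apply mex_not_mem ({sg n} ∪
         (if 2 ∣ (n + 1) then {sg ((n + 1) / 2)} else ∅) ∪
         (if 3 ∣ (n + 1) then {sg ((n + 1) / 3)} else ∅))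
  rw [h]
  simp [Finset.mem_union]

lemma sg_coprime (n : ℕ) (h2 : ¬ 2 ∣ (n + 1)) (h3 : ¬ 3 ∣ (n + 1)) :
    sg (n + 1) = if sg n = 0 then 1 else 0 := by
  rw [sg_succ, if_neg h2, if_neg h3, Finset.union_empty, Finset.union_empty]
  have h1 := mex_not_mem {sg n}
  rw [Finset.mem_singleton] at h1
  split_ifs with h
  · by_contra hne
    rcases Nat.lt_or_ge 1 (mex {sg n}) with hl | hl
    · have := mem_of_lt_mex hl
      rw [Finset.mem_singleton] at this
      omega
    · omega
  · by_contra hne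
    have hl : 0 < mex {sg n} := Nat.pos_of_ne_zero hne
    have := mem_of_lt_mex hl
    rw [Finset.mem_singleton] at this
    omega

lemma sg_one : sg 1 = 1 := by
  have h := sg_coprime 0 (by omega) (by omega)
  have h0 : sg 0 = 0 := by rw [sg]
  rw [h0] at h
  simpa using h

/-- Every block {6k+1, ..., 6k+5} contains a position with sg value 1. -/
lemma block (k : ℕ) : ∃ r : ℕ, 1 ≤ r ∧ r ≤ 5 ∧ sg (6 * k + r) = 1 := by
  by_contra h
  push_neg at h
  have h1 := h 1 (by norm_num) (by norm_num)
  have h2 := h 2 (by norm_num) (by norm_num)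
  have h3 := h 3 (by norm_num) (by norm_num)
  have h4 := h 4 (by norm_num) (by norm_num)
  have h5 := h 5 (by norm_num) (by norm_num)
  -- sg (6k+1) = 0
  have e1 : sg (6 * k + 1) = 0 := by
    rw [sg_coprime (6 * k) (by omega) (by omega)] at h1 ⊢
    split_ifs at h1 ⊢ <;> omega
  -- sg (3k+1) = 1, from position 6k+2
  have g1 : sg (3 * k + 1) = 1 := by
    have e : 6 * k + 2 = (6 * k + 1) + 1 := by omega
    rw [e] at h2
    rw [sg_succ (6 * k + 1), if_pos (show 2 ∣ (6 * k + 1 + 1) by omega),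
        if_neg (show ¬ 3 ∣ (6 * k + 1 + 1) by omega),
        (show (6 * k + 1 + 1) / 2 = 3 * k + 1 by omega)] at h2
    set S := ({sg (6 * k + 1)} ∪ {sg (3 * k + 1)} ∪ (∅ : Finset ℕ)) with hS
    have hne0 : mex S ≠ 0 := by
      intro h0
      apply mex_not_mem S
      rw [h0, hS]
      simp [e1]
    have hlt : 1 < mex S := by omega
    have hm := mem_of_lt_mex hlt
    rw [hS] at hm
    simp only [Finset.mem_union, Finset.mem_singleton, Finset.notMem_empty,
      or_false] at hm
    rcases hm with hm | hm
    · omega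
    · omega
  -- sg (6k+4) ≠ 0, from position 6k+5
  have e4 : sg (6 * k + 4) ≠ 0 := by
    have e : 6 * k + 5 = (6 * k + 4) + 1 := by omega
    rw [e] at h5
    rw [sg_coprime (6 * k + 4) (by omega) (by omega)] at h5
    split_ifs at h5 with hc
    · omega
    · exact hc
  -- sg (3k+2) = 1, from position 6k+4
  have g2 : sg (3 * k + 2) = 1 := by
    have e : 6 * k + 4 = (6 * k + 3) + 1 := by omega
    rw [e] at h4 e4
    rw [sg_succ (6 * k + 3), if_pos (show 2 ∣ (6 * k + 3 + 1) by omega),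
        if_neg (show ¬ 3 ∣ (6 * k + 3 + 1) by omega),
        (show (6 * k + 3 + 1) / 2 = 3 * k + 2 by omega)] at h4 e4
    set S := ({sg (6 * k + 3)} ∪ {sg (3 * k + 2)} ∪ (∅ : Finset ℕ)) with hS
    have hlt : 1 < mex S := by omega
    have hm := mem_of_lt_mex hlt
    rw [hS] at hm
    simp only [Finset.mem_union, Finset.mem_singleton, Finset.notMem_empty,
      or_false] at hm
    rcases hm with hm | hm
    · omega
    · omega
  -- contradiction: sg (3k+2) ≠ sg (3k+1)
  have := sg_succ_ne (3 * k + 1)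
  rw [show 3 * k + 1 + 1 = 3 * k + 2 by omega] at this
  rw [g1, g2] at this
  exact this rfl

theorem gap_one (n : ℕ) (hn : 1 < n) :
    ∃ i : ℕ, 1 ≤ i ∧ i ≤ 10 ∧ i ≤ n - 1 ∧ sg (n - i) = 1 := by
  rcases le_or_gt n 11 with h | h
  · refine ⟨n - 1, by omega, by omega, by omega, ?_⟩
    rw [show n - (n - 1) = 1 by omega, sg_one]
  · obtain ⟨r, hr1, hr5, hsg⟩ := block ((n - 6) / 6)
    refine ⟨n - (6 * ((n - 6) / 6) + r), by omega, by omega, by omega, ?_⟩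
    rw [show n - (n - (6 * ((n - 6) / 6) + r)) = 6 * ((n - 6) / 6) + r by omega]
    exact hsg
end
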